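/- arXiv:1408.6216 — 3 statements merged into one kernel-verified Lean document; each statement's English description precedes it below -/
import Mathlib

section
/- Let n = 2m with m ≥ 2, let P_n be the regular n-gon, let a = cos(π/n), w = 2a, â = (cos(π/n), sin(π/n)) (the unit outward normal to the edge with midpoint m₁ = a·â), and let 0 ≤ t ≤ w. Set p = m₁ − t·â and q = −m₁ + t·â (a symmetric pair of points on the segment joining the midpoints m₁ and −m₁ of two parallel edges). Then every point z in the frontier ∂P_n of P_n satisfies ‖z − p‖ + ‖z − q‖ ≥ w. (The ellipse with foci p, q and major axis length w is inscribed in the n-gon, tangent along its major axis, so all boundary points are at combined distance at least w from p and q.) -/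
open Real

noncomputable section

/-- The Euclidean plane. -/
abbrev E2 : Type := EuclideanSpace ℝ (Fin 2)

/-- The point `(x, y)` in the Euclidean plane. -/
def pt (x y : ℝ) : E2 := WithLp.toLp 2 ![x, y]

/-- The regular `n`-gon: the convex hull of the `n`-th roots of unity. -/
def Pgon (n : ℕ) : Set E2 :=
  convexHull ℝ
    (Set.range fun k : Fin n => pt (Real.cos (2 * π * k / n)) (Real.sin (2 * π * k / n)))

/-- The pseudometric of the double of a plane set `P`: two points on the same
face are at their Euclidean distance, while points on opposite faces are at
the infimum over boundary points `z ∈ ∂P` of `‖x - z‖ + ‖z - y‖`. -/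
def doubleDist (P : Set E2) (p q : Bool × E2) : ℝ :=
  if p.1 = q.1 then ‖p.2 - q.2‖
  else sInf ((fun z => ‖p.2 - z‖ + ‖z - q.2‖) '' frontier P)

/-- The unit outward normal to the `k`-th edge of the regular `n`-gon. -/
def outNormal (n k : ℕ) : E2 :=
  pt (Real.cos ((2 * k + 1) * π / n)) (Real.sin ((2 * k + 1) * π / n))

/-- The `k`-th meridian of the double of the regular `n`-gon (`n` even),
periodic of period `2w` where `w = 2 cos(π/n)`: it runs through the center of
the top face from the midpoint `m_k = a • â_k` of the `k`-th edge to the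
midpoint of the opposite edge, then back through the bottom face. -/
def meridian (n k : ℕ) (t : ℝ) : Bool × E2 :=
  let a := Real.cos (π / n)
  let w := 2 * a
  let t' := t - 2 * w * (⌊t / (2 * w)⌋ : ℝ)
  if t' < w then (false, a • outNormal n k - t' • outNormal n k)
  else (true, -(a • outNormal n k) + (t' - w) • outNormal n k)

/-!
Since `q = -p`, the triangle inequality gives `‖z - p‖ + ‖z - q‖ ≥ ‖2 • z‖ = 2‖z‖`, so it suffices
that every frontier point of the `n`-gon has norm at least its inradius `cos (π / n)`. That is the
statement that the open disc of radius `cos (π / n)` lies in the polygon: a point outside the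
polygon is separated from it by a line with unit normal `u`, but some vertex makes an angle at
most `π / n` with `u`, so its inner product with `u` is already at least `cos (π / n)`.
-/

open Metric

theorem ball_subset_of_forall_exists_inner_ge {H : Type*} [NormedAddCommGroup H]
    [InnerProductSpace ℝ H] [CompleteSpace H] {C : Set H} (hconv : Convex ℝ C)
    (hclosed : IsClosed C) {r : ℝ} (hsupp : ∀ u : H, ∃ v ∈ C, r * ‖u‖ ≤ inner ℝ u v) :
    ball 0 r ⊆ C := by
  intro y hy
  by_contra hyC
  obtain ⟨f, c, hfC, hfy⟩ := geometric_hahn_banach_closed_point hconv hclosed hyC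
  set u := (InnerProductSpace.toDual ℝ H).symm f
  obtain ⟨v, hvC, hv⟩ := hsupp u
  have hvy : inner ℝ u v < inner ℝ u y := by
    simpa only [u, InnerProductSpace.toDual_symm_apply] using (hfC v hvC).trans hfy
  have hyr : ‖y‖ < r := mem_ball_zero_iff.mp hy
  nlinarith [real_inner_le_norm u y, norm_nonneg u]

theorem exists_inner_pt_cos_sin_eq (u : E2) :
    ∃ ψ : ℝ, ∀ θ : ℝ, inner ℝ u (pt (cos θ) (sin θ)) = ‖u‖ * cos (ψ - θ) := by
  set ζ : ℂ := ⟨u 0, u 1⟩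
  have hnorm : ‖ζ‖ = ‖u‖ := by
    rw [EuclideanSpace.norm_eq, Complex.norm_def, Complex.normSq_mk, Fin.sum_univ_two]
    simp only [Real.norm_eq_abs, sq_abs]
    ring_nf
  have hre : ‖u‖ * cos ζ.arg = u 0 := hnorm ▸ Complex.norm_mul_cos_arg ζ
  have him : ‖u‖ * sin ζ.arg = u 1 := hnorm ▸ Complex.norm_mul_sin_arg ζ
  refine ⟨ζ.arg, fun θ => ?_⟩
  simp only [PiLp.inner_apply, Fin.sum_univ_two, pt, RCLike.inner_apply, conj_trivial,
    Matrix.cons_val_zero, Matrix.cons_val_one, cos_sub]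
  linear_combination (-cos θ) * hre - sin θ * him

theorem exists_int_abs_sub_two_pi_mul_div_le {n : ℕ} (hn : 0 < n) (ψ : ℝ) :
    ∃ j : ℤ, |ψ - 2 * π * j / n| ≤ π / n := by
  set x := ψ * n / (2 * π)
  refine ⟨round x, ?_⟩
  have hscale : ψ - 2 * π * round x / n = 2 * π / n * (x - round x) := by
    simp only [x]
    field_simp
  calc |ψ - 2 * π * round x / n| = 2 * π / n * |x - round x| := by
        rw [hscale, abs_mul, abs_of_pos (by positivity)]
    _ ≤ 2 * π / n * (1 / 2) := by gcongr; exact abs_sub_round x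
    _ = π / n := by ring

theorem pt_cos_sin_mem_Pgon {n : ℕ} (hn : 0 < n) (j : ℤ) :
    pt (cos (2 * π * j / n)) (sin (2 * π * j / n)) ∈ Pgon n := by
  have hn' : (0 : ℤ) < n := by exact_mod_cast hn
  obtain ⟨k, hk⟩ : ∃ k : ℕ, (k : ℤ) = j % n :=
    ⟨_, Int.toNat_of_nonneg (Int.emod_nonneg j hn'.ne')⟩
  have hkn : k < n := by have := Int.emod_lt_of_pos j hn'; omega
  have hangle : 2 * π * j / n = 2 * π * k / n + (j / n : ℤ) * (2 * π) := by
    have hj : (j : ℝ) = k + (j / n : ℤ) * n := by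
      rw [← Int.cast_natCast k, hk, Int.emod_def]
      push_cast
      ring
    rw [hj]
    field_simp
  rw [hangle, cos_add_int_mul_two_pi, sin_add_int_mul_two_pi]
  exact subset_convexHull ℝ _ ⟨⟨k, hkn⟩, rfl⟩

theorem exists_mem_Pgon_inner_ge {n : ℕ} (hn : 0 < n) (u : E2) :
    ∃ v ∈ Pgon n, cos (π / n) * ‖u‖ ≤ inner ℝ u v := by
  obtain ⟨ψ, hψ⟩ := exists_inner_pt_cos_sin_eq u
  obtain ⟨j, hj⟩ := exists_int_abs_sub_two_pi_mul_div_le hn ψ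
  refine ⟨_, pt_cos_sin_mem_Pgon hn j, ?_⟩
  have hπn : π / n ≤ π := div_le_self pi_pos.le (by exact_mod_cast hn)
  rw [hψ, ← cos_abs (ψ - 2 * π * j / n), mul_comm]
  gcongr
  exact cos_le_cos_of_nonneg_of_le_pi (abs_nonneg _) hπn hj

theorem ball_subset_Pgon {n : ℕ} (hn : 0 < n) : ball 0 (cos (π / n)) ⊆ Pgon n :=
  ball_subset_of_forall_exists_inner_ge (convex_convexHull ℝ _)
    ((Set.finite_range _).isCompact_convexHull (𝕜 := ℝ)).isClosed (exists_mem_Pgon_inner_ge hn)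

theorem cos_pi_div_le_norm_of_mem_frontier_Pgon {n : ℕ} (hn : 0 < n) {z : E2}
    (hz : z ∈ frontier (Pgon n)) : cos (π / n) ≤ ‖z‖ := by
  by_contra! hlt
  exact hz.2 (interior_maximal (ball_subset_Pgon hn) isOpen_ball (mem_ball_zero_iff.2 hlt))

theorem ellipse_inscribed_in_even_polygon_general
    (m n : ℕ) (hm : 2 ≤ m) (hn : n = 2 * m)
    (a w : ℝ) (ha : a = Real.cos (π / n)) (hw : w = 2 * a)
    (ahat : E2)
    (t : ℝ)
    (p q : E2) (hp : p = a • ahat - t • ahat) (hq : q = -(a • ahat) + t • ahat) :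
    ∀ z ∈ frontier (Pgon n), w ≤ ‖z - p‖ + ‖z - q‖ := by
  intro z hz
  have hsum : (z - p) + (z - q) = (2 : ℝ) • z := by
    rw [hp, hq]
    module
  calc w = 2 * cos (π / n) := by rw [hw, ha]
    _ ≤ 2 * ‖z‖ := by
        gcongr
        exact cos_pi_div_le_norm_of_mem_frontier_Pgon (by omega) hz
    _ = ‖(z - p) + (z - q)‖ := by rw [hsum, norm_smul, Real.norm_two]
    _ ≤ ‖z - p‖ + ‖z - q‖ := norm_add_le _ _

/-- Inscribed-ellipse inequality in the regular `n`-gon (`n = 2m` even):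
for a symmetric pair of points `p = m₁ - t•â`, `q = -m₁ + t•â` on the
segment joining midpoints of parallel edges, every frontier point `z` of the
`n`-gon satisfies `‖z - p‖ + ‖z - q‖ ≥ w`, where `w = 2 cos(π/n)` is the
width between parallel edges. -/
theorem ellipse_inscribed_in_even_polygon
    (m n : ℕ) (hm : 2 ≤ m) (hn : n = 2 * m)
    (a w : ℝ) (ha : a = Real.cos (π / n)) (hw : w = 2 * a)
    (ahat : E2) (hahat : ahat = pt (Real.cos (π / n)) (Real.sin (π / n)))
    (t : ℝ) (ht0 : 0 ≤ t) (htw : t ≤ w)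
    (p q : E2) (hp : p = a • ahat - t • ahat) (hq : q = -(a • ahat) + t • ahat) :
    ∀ z ∈ frontier (Pgon n), w ≤ ‖z - p‖ + ‖z - q‖ :=
  ellipse_inscribed_in_even_polygon_general m n hm hn a w ha hw ahat t p q hp hq
end
end

section
/- Let n ≥ 3 be an odd integer and let P_n be the regular n-gon. Then the double of P_n admits no half-geodesic: there is no L > 0 and no map γ : ℝ → {0,1} × P_n such that D(γ(t+L), γ(t)) = 0 for all t ∈ ℝ and D(γ(s), γ(t)) = |s − t| whenever |s − t| ≤ L/2. -/
/-!
A half-geodesic `γ` must touch the boundary `∂P` at some time `u`: otherwise it stays on one face,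
and a closed plane curve of length `L` cannot be isometric on all arcs of length `L / 2`. Distances
to a boundary point are Euclidean, so `γ` runs along the chord from `A = γ u` to
`B = γ (u + L / 2)` and back. A point visited at two times `s ≠ t` lies at distance `|s - t| / 2`
from `∂P`; hence `B ∈ ∂P`, and the disc of radius `L / 4` about the midpoint of `AB` is inscribed
in `P` and touches `∂P` at `A` and `B`. An inscribed disc touches a polygon along edges, radially
along the outward normals, so two edges of `P_n` would have opposite normals, which is impossible
for odd `n`.
-/

open Real

noncomputable section

open Metric Set
open scoped InnerProductSpace

lemma Convex.smul_add_smul_mem_of_zero_mem {E : Type*} [AddCommGroup E] [Module ℝ E] {s : Set E}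
    (hs : Convex ℝ s) (h0 : (0 : E) ∈ s) {x y : E} (hx : x ∈ s) (hy : y ∈ s) {a b : ℝ}
    (ha : 0 ≤ a) (hb : 0 ≤ b) (hab : a + b ≤ 1) : a • x + b • y ∈ s := by
  have h := hs.sum_mem (t := Finset.univ) (w := ![1 - a - b, a, b]) (z := ![0, x, y])
    (by intro i; fin_cases i <;> simp <;> linarith) (by simp [Fin.sum_univ_three]; ring)
    (by intro i; fin_cases i <;> simpa)
  simpa [Fin.sum_univ_three] using h

lemma closedBall_infDist_frontier_subset {E : Type*} [NormedAddCommGroup E] [NormedSpace ℝ E]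
    {s : Set E} (hs : IsClosed s) {c : E} (hc : c ∈ s) :
    closedBall c (infDist c (frontier s)) ⊆ s := by
  rcases (infDist_nonneg (x := c) (s := frontier s)).eq_or_lt with h | h
  · rw [← h, closedBall_zero]
    exact singleton_subset_iff.2 hc
  have hcint : c ∈ interior s := by
    have hcl : c ∈ interior s ∪ frontier s :=
      closure_eq_interior_union_frontier s ▸ subset_closure hc
    exact hcl.resolve_right fun hcf => h.ne' (infDist_zero_of_mem hcf)
  have hball : ball c (infDist c (frontier s)) ⊆ interior s := by
    refine (convex_ball _ _).isPreconnected.subset_of_closure_inter_subset isOpen_interior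
      ⟨c, mem_ball_self h, hcint⟩ fun y ⟨hy, hyb⟩ => ?_
    have hy' : y ∈ interior s ∪ frontier s :=
      closure_eq_interior_union_frontier s ▸ closure_mono interior_subset hy
    exact hy'.resolve_right (ball_infDist_subset_compl hyb)
  rw [← closure_ball _ h.ne']
  exact hs.closure_subset_iff.2 (hball.trans interior_subset)

lemma eq_lineMap_of_dist_le {E : Type*} [NormedAddCommGroup E] [NormedSpace ℝ E]
    [StrictConvexSpace ℝ E] {a b y : E} {r : ℝ} (hay : dist a y ≤ r * dist a b)
    (hyb : dist y b ≤ (1 - r) * dist a b) : y = AffineMap.lineMap a b r := by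
  have := dist_triangle a y b
  exact eq_lineMap_of_dist_eq_mul_of_dist_eq_mul (by linarith) (by linarith)

/-- The points at `L / 4` and `3 L / 4` would both be the midpoint of `f 0` and `f (L / 2)`. -/
lemma not_dist_eq_abs_sub_of_loop {E : Type*} [NormedAddCommGroup E] [NormedSpace ℝ E]
    [StrictConvexSpace ℝ E] {f : ℝ → E} {L : ℝ} (hL : 0 < L) (hloop : f L = f 0) :
    ¬ ∀ s t, |s - t| ≤ L / 2 → dist (f s) (f t) = |s - t| := by
  intro hf
  have hdist (s t : ℝ) (h₁ : 0 ≤ t - s) (h₂ : t - s ≤ L / 2) : dist (f s) (f t) = t - s := by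
    rw [hf s t (by rw [abs_sub_comm, abs_of_nonneg h₁]; exact h₂), abs_sub_comm, abs_of_nonneg h₁]
  have h₁ : f (L / 4) = midpoint ℝ (f 0) (f (L / 2)) :=
    eq_midpoint_of_dist_eq_half (by rw [hdist, hdist] <;> linarith)
      (by rw [hdist, hdist] <;> linarith)
  have h₂ : f (3 * L / 4) = midpoint ℝ (f (L / 2)) (f 0) := by
    rw [← hloop]
    exact eq_midpoint_of_dist_eq_half (by rw [hdist, hdist] <;> linarith)
      (by rw [hdist, hdist] <;> linarith)
  have := hdist (L / 4) (3 * L / 4) (by linarith) (by linarith)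
  rw [h₁, h₂, midpoint_comm, dist_self] at this
  linarith

lemma pt_inner_pt (a b c d : ℝ) : ⟪pt a b, pt c d⟫_ℝ = a * c + b * d := by
  simp [pt, PiLp.inner_apply, Fin.sum_univ_two]
  ring

def unitVec (θ : ℝ) : E2 := pt (cos θ) (sin θ)

lemma orthonormalBasisOneI_repr_exp (θ : ℝ) :
    Complex.orthonormalBasisOneI.repr (Complex.exp (θ * Complex.I)) = unitVec θ := by
  ext i
  fin_cases i <;> simp [unitVec, pt, Complex.exp_ofReal_mul_I_re, Complex.exp_ofReal_mul_I_im]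

lemma inner_unitVec_unitVec (a b : ℝ) : ⟪unitVec a, unitVec b⟫_ℝ = cos (a - b) := by
  rw [unitVec, unitVec, pt_inner_pt, cos_sub]

lemma norm_unitVec (θ : ℝ) : ‖unitVec θ‖ = 1 := by
  rw [← orthonormalBasisOneI_repr_exp, LinearIsometryEquiv.norm_map,
    Complex.norm_exp_ofReal_mul_I]

lemma neg_unitVec (θ : ℝ) : -unitVec θ = unitVec (θ + π) := by
  ext i
  fin_cases i <;> simp [unitVec, pt, cos_add_pi, sin_add_pi]

lemma unitVec_add_int_mul_two_pi (θ : ℝ) (m : ℤ) : unitVec (θ + m * (2 * π)) = unitVec θ := by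
  rw [unitVec, unitVec, cos_add_int_mul_two_pi, sin_add_int_mul_two_pi]

lemma exists_eq_norm_smul_unitVec (z : E2) : ∃ φ ∈ Ico 0 (2 * π), z = ‖z‖ • unitVec φ := by
  set w := Complex.orthonormalBasisOneI.repr.symm z
  refine ⟨toIcoMod two_pi_pos 0 (Complex.arg w), toIcoMod_mem_Ico' _ _, ?_⟩
  rw [toIcoMod, zsmul_eq_mul, sub_eq_add_neg, ← neg_mul, ← Int.cast_neg,
    unitVec_add_int_mul_two_pi, ← orthonormalBasisOneI_repr_exp, ← LinearIsometryEquiv.map_smul,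
    ← Complex.orthonormalBasisOneI.repr.symm.norm_map z, Complex.real_smul,
    Complex.norm_mul_exp_arg_mul_I, LinearIsometryEquiv.apply_symm_apply]

lemma outNormal_eq_unitVec (n k : ℕ) : outNormal n k = unitVec ((2 * k + 1) * π / n) := rfl

lemma norm_outNormal (n k : ℕ) : ‖outNormal n k‖ = 1 := norm_unitVec _

lemma outNormal_ne_neg {n : ℕ} (hodd : Odd n) (j k : ℕ) : outNormal n j ≠ -outNormal n k := by
  intro h
  rw [outNormal_eq_unitVec, outNormal_eq_unitVec, neg_unitVec, ← orthonormalBasisOneI_repr_exp,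
    ← orthonormalBasisOneI_repr_exp] at h
  obtain ⟨m, hm⟩ := Complex.exp_eq_exp_iff_exists_int.1 (LinearIsometryEquiv.injective _ h)
  have hangle : (2 * j + 1) * π / n = ((2 * k + 1) * π / n + π) + m * (2 * π) := by
    simpa using congrArg Complex.im hm
  have hn : (n : ℝ) ≠ 0 := by exact_mod_cast hodd.pos.ne'
  have hreal : (2 * ((j : ℝ) - k)) = n * (2 * m + 1) := by
    field_simp at hangle
    nlinarith [pi_pos]
  have hint : 2 * ((j : ℤ) - k) = n * (2 * m + 1) := by exact_mod_cast hreal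
  have hodd' : Odd ((n : ℤ) * (2 * m + 1)) :=
    (Int.odd_coe_nat n |>.2 hodd).mul (odd_two_mul_add_one m)
  rw [← hint] at hodd'
  exact Int.not_even_iff_odd.2 hodd' (even_two_mul _)

lemma cos_mul_pi_div_le_of_odd {n : ℕ} (hn : 0 < n) {t : ℤ} (ht : Odd t) :
    cos (t * π / n) ≤ cos (π / n) := by
  have hn' : (0 : ℝ) < n := by exact_mod_cast hn
  set l := round ((t : ℝ) / (2 * n))
  set s := t - 2 * n * l
  -- `s` is the representative of `t` modulo `2n` in `[-n, n]`
  have hs_le : |(s : ℝ)| ≤ n := by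
    have h := abs_sub_round ((t : ℝ) / (2 * n))
    have hs : (s : ℝ) = 2 * n * ((t : ℝ) / (2 * n) - l) := by
      simp only [s]; push_cast; field_simp
    rw [hs, abs_mul, abs_of_pos (by positivity)]
    nlinarith
  have hs_ge : (1 : ℝ) ≤ |(s : ℝ)| := by
    have hs : Odd s := ht.sub_even (by simp [mul_assoc])
    have : s ≠ 0 := by rintro h; simp [h] at hs
    exact_mod_cast Int.one_le_abs this
  have hcos : cos (t * π / n) = cos (|(s : ℝ)| * π / n) := by
    have : (t : ℝ) * π / n = s * π / n + l * (2 * π) := by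
      simp only [s]; push_cast; field_simp; ring
    rw [this, cos_add_int_mul_two_pi, ← cos_abs, abs_div, abs_mul, abs_of_pos pi_pos,
      abs_of_pos hn']
  rw [hcos]
  apply cos_le_cos_of_nonneg_of_le_pi (by positivity)
  · rw [div_le_iff₀ hn']; nlinarith [mul_le_mul_of_nonneg_right hs_le pi_pos.le]
  · gcongr; exact le_mul_of_one_le_left pi_pos.le hs_ge

lemma unitVec_mem_Pgon {n : ℕ} (hn : 0 < n) (m : ℕ) : unitVec (2 * π * m / n) ∈ Pgon n := by
  have hmod : unitVec (2 * π * m / n) = unitVec (2 * π * (m % n : ℕ) / n) := by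
    have : 2 * π * m / n = 2 * π * (m % n : ℕ) / n + (m / n : ℕ) * (2 * π) := by
      conv_lhs => rw [← Nat.mod_add_div m n]
      push_cast
      field_simp
    rw [this]
    exact_mod_cast unitVec_add_int_mul_two_pi _ (m / n : ℕ)
  rw [hmod]
  exact subset_convexHull ℝ _ ⟨⟨m % n, Nat.mod_lt m hn⟩, rfl⟩

lemma convex_Pgon (n : ℕ) : Convex ℝ (Pgon n) := convex_convexHull ℝ _

lemma isCompact_Pgon (n : ℕ) : IsCompact (Pgon n) :=
  (finite_range _).isCompact_convexHull (𝕜 := ℝ)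

lemma sum_unitVec_eq_zero {n : ℕ} (hn : 1 < n) :
    ∑ m ∈ Finset.range n, unitVec (2 * π * m / n) = 0 := by
  have hζ := Complex.isPrimitiveRoot_exp n (by omega)
  have hpow (m : ℕ) : Complex.exp (2 * π * Complex.I / n) ^ m
      = Complex.exp ((2 * π * m / n : ℝ) * Complex.I) := by
    rw [← Complex.exp_nat_mul]; push_cast; ring_nf
  simp_rw [← orthonormalBasisOneI_repr_exp, ← map_sum, ← hpow, hζ.geom_sum_eq_zero hn, map_zero]

lemma zero_mem_Pgon {n : ℕ} (hn : 1 < n) : (0 : E2) ∈ Pgon n := by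
  have hn' : (n : ℝ) ≠ 0 := by positivity
  have h := (convex_Pgon n).sum_mem (t := Finset.range n) (w := fun _ => (n : ℝ)⁻¹)
    (fun _ _ => by positivity) (by simp [hn']) (fun m _ => unitVec_mem_Pgon (by omega) m)
  rwa [← Finset.smul_sum, sum_unitVec_eq_zero hn, smul_zero] at h

lemma Pgon_subset_setOf_inner_le {n : ℕ} (hn : 0 < n) :
    Pgon n ⊆ {z | ∀ k : ℕ, ⟪z, outNormal n k⟫_ℝ ≤ cos (π / n)} := by
  refine convexHull_min ?_ ?_
  · rintro _ ⟨m, rfl⟩ k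
    change ⟪unitVec (2 * π * ((m : ℕ) : ℝ) / n), _⟫_ℝ ≤ _
    rw [outNormal_eq_unitVec, inner_unitVec_unitVec]
    have : 2 * π * ((m : ℕ) : ℝ) / n - (2 * k + 1) * π / n
        = ((2 * (m : ℕ) - 2 * k - 1 : ℤ) : ℝ) * π / n := by
      push_cast; ring
    exact this ▸ cos_mul_pi_div_le_of_odd hn ⟨(m : ℕ) - k - 1, by ring⟩
  · simp only [ofPred_forall]
    exact convex_iInter fun k => convex_halfSpace_le (innerₛₗ ℝ |>.flip (outNormal n k)).isLinear _

lemma sin_two_mul_smul_unitVec (p χ M : ℝ) :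
    sin (2 * p) • unitVec (M - χ)
      = sin (p + χ) • unitVec (M - p) + sin (p - χ) • unitVec (M + p) := by
  ext i
  fin_cases i <;>
  · simp [unitVec, pt, sin_add, sin_sub, cos_add, cos_sub, sin_two_mul]
    ring

/-- The cone over the `m`-th edge, cut by that edge's half-plane. -/
lemma smul_unitVec_mem_Pgon {n : ℕ} (hn : 3 ≤ n) (m : ℕ) {r χ : ℝ} (hr : 0 ≤ r)
    (hχ : |χ| ≤ π / n) (hrχ : r * cos χ ≤ cos (π / n)) :
    r • unitVec ((2 * m + 1) * π / n - χ) ∈ Pgon n := by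
  set p := π / n
  have hp : 0 < p := by positivity
  have hp3 : p ≤ π / 3 := div_le_div_of_nonneg_left pi_pos.le (by norm_num) (by exact_mod_cast hn)
  have hsin : 0 < sin (2 * p) := sin_pos_of_pos_of_lt_pi (by positivity) (by linarith [pi_pos])
  have hcos : 0 < cos p := cos_pos_of_mem_Ioo ⟨by linarith, by linarith [pi_pos]⟩
  obtain ⟨hχ₁, hχ₂⟩ := abs_le.1 hχ
  set a := r * sin (p + χ) / sin (2 * p)
  set b := r * sin (p - χ) / sin (2 * p)
  have ha : 0 ≤ a := div_nonneg (mul_nonneg hr (sin_nonneg_of_nonneg_of_le_pi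
    (by linarith) (by linarith))) hsin.le
  have hb : 0 ≤ b := div_nonneg (mul_nonneg hr (sin_nonneg_of_nonneg_of_le_pi
    (by linarith) (by linarith))) hsin.le
  have hab : a + b ≤ 1 := by
    have hsinp : sin p ≠ 0 := (sin_pos_of_pos_of_lt_pi hp (by linarith [pi_pos])).ne'
    have : a + b = r * cos χ / cos p := by
      simp only [a, b, sin_two_mul, sin_add, sin_sub]
      field_simp
      ring
    rwa [this, div_le_one hcos]
  have hcomb : r • unitVec ((2 * m + 1) * π / n - χ)
      = a • unitVec (2 * π * m / n) + b • unitVec (2 * π * (m + 1 : ℕ) / n) := by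
    have h := sin_two_mul_smul_unitVec p χ ((2 * m + 1) * π / n)
    rw [show (2 * m + 1) * π / n - p = 2 * π * m / n by simp only [p]; ring,
      show (2 * m + 1) * π / n + p = 2 * π * (m + 1 : ℕ) / n by simp only [p]; push_cast; ring] at h
    calc r • unitVec ((2 * m + 1) * π / n - χ)
        = (r / sin (2 * p)) • (sin (2 * p) • unitVec ((2 * m + 1) * π / n - χ)) := by
          rw [smul_smul, div_mul_cancel₀ _ hsin.ne']
      _ = _ := by
          rw [h, smul_add, smul_smul, smul_smul, div_mul_eq_mul_div, div_mul_eq_mul_div]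
  rw [hcomb]
  exact (convex_Pgon n).smul_add_smul_mem_of_zero_mem (zero_mem_Pgon (by omega))
    (unitVec_mem_Pgon (by omega) _) (unitVec_mem_Pgon (by omega) _) ha hb hab

lemma mem_Pgon_of_forall_inner_le {n : ℕ} (hn : 3 ≤ n) {z : E2}
    (hz : ∀ k < n, ⟪z, outNormal n k⟫_ℝ ≤ cos (π / n)) : z ∈ Pgon n := by
  obtain ⟨φ, ⟨hφ₀, hφ⟩, hzφ⟩ := exists_eq_norm_smul_unitVec z
  have hn' : (0 : ℝ) < n := by positivity
  set q := φ * n / (2 * π)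
  set m := ⌊q⌋₊
  have hq : φ = 2 * π * q / n := by simp only [q]; field_simp
  have hm : m < n := (Nat.floor_lt (by positivity)).2 <| by
    rw [div_lt_iff₀ (by positivity)]; nlinarith
  have hqm : m ≤ q := Nat.floor_le (by positivity)
  have hqm' : q < m + 1 := Nat.lt_floor_add_one q
  set χ := (2 * m + 1) * π / n - φ
  have hχ : |χ| ≤ π / n := by
    have : χ = π / n * (2 * m + 1 - 2 * q) := by simp only [χ, hq]; ring
    rw [this, abs_mul, abs_of_pos (by positivity)]
    exact mul_le_of_le_one_right (by positivity) (abs_le.2 ⟨by linarith, by linarith⟩)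
  have hinner : ⟪z, outNormal n m⟫_ℝ = ‖z‖ * cos χ := by
    conv_lhs => rw [hzφ]
    rw [real_inner_smul_left, outNormal_eq_unitVec, inner_unitVec_unitVec, ← cos_neg, neg_sub]
  have h := smul_unitVec_mem_Pgon hn m (norm_nonneg z) hχ (hinner ▸ hz m hm)
  rwa [show (2 * m + 1) * π / n - χ = φ by ring, ← hzφ] at h

lemma frontier_Pgon_nonempty {n : ℕ} (hn : 0 < n) : (frontier (Pgon n)).Nonempty :=
  nonempty_frontier_iff.2 ⟨⟨_, unitVec_mem_Pgon hn 0⟩, (isCompact_Pgon n).ne_univ⟩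

lemma exists_inner_outNormal_eq_of_mem_frontier {n : ℕ} (hn : 3 ≤ n) {A : E2}
    (hA : A ∈ frontier (Pgon n)) : ∃ k, ⟪A, outNormal n k⟫_ℝ = cos (π / n) := by
  by_contra! hne
  set U := ⋂ k : Fin n, {z : E2 | ⟪z, outNormal n k⟫_ℝ < cos (π / n)}
  have hU : IsOpen U := isOpen_iInter_of_finite fun k =>
    isOpen_lt (continuous_id.inner continuous_const) continuous_const
  have hUP : U ⊆ Pgon n := fun z hz =>
    mem_Pgon_of_forall_inner_le hn fun k hk => (mem_iInter.1 hz ⟨k, hk⟩).le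
  have hAU : A ∈ U := mem_iInter.2 fun k =>
    (Pgon_subset_setOf_inner_le (n := n) (by omega)
      ((isCompact_Pgon n).isClosed.frontier_subset hA) k).lt_of_ne (hne k)
  exact hA.2 (interior_maximal hUP hU hAU)

lemma exists_sub_eq_smul_outNormal {n : ℕ} (hn : 3 ≤ n) {A c : E2} (hA : A ∈ frontier (Pgon n))
    (hc : c ∈ Pgon n) (hAc : dist A c = infDist c (frontier (Pgon n))) :
    ∃ k, A - c = dist A c • outNormal n k := by
  obtain ⟨k, hk⟩ := exists_inner_outNormal_eq_of_mem_frontier hn hA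
  refine ⟨k, ?_⟩
  have hmem : c + dist A c • outNormal n k ∈ Pgon n := by
    apply closedBall_infDist_frontier_subset (isCompact_Pgon n).isClosed hc
    rw [mem_closedBall, dist_eq_norm, add_sub_cancel_left, norm_smul, norm_outNormal, mul_one,
      Real.norm_of_nonneg dist_nonneg, hAc]
  have hle := Pgon_subset_setOf_inner_le (by omega) hmem k
  rw [inner_add_left, real_inner_smul_left, real_inner_self_eq_norm_sq, norm_outNormal, ← hk]
    at hle
  have heq : ⟪A - c, outNormal n k⟫_ℝ = ‖A - c‖ * ‖outNormal n k‖ := by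
    refine le_antisymm (real_inner_le_norm _ _) ?_
    rw [inner_sub_left, norm_outNormal, ← dist_eq_norm]
    linarith
  have := inner_eq_norm_mul_iff_real.1 heq
  rwa [norm_outNormal, one_smul, ← dist_eq_norm] at this

section Double

variable {P : Set E2} {p q : Bool × E2}

lemma doubleDist_of_fst_eq (h : p.1 = q.1) : doubleDist P p q = ‖p.2 - q.2‖ := if_pos h

lemma doubleDist_of_fst_ne (h : p.1 ≠ q.1) :
    doubleDist P p q = ⨅ z : frontier P, (‖p.2 - z‖ + ‖(z : E2) - q.2‖) := by
  rw [doubleDist, if_neg h, sInf_image']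

lemma bddBelow_range_norm_add_norm (x y : E2) :
    BddBelow (range fun z : frontier P => ‖x - z‖ + ‖(z : E2) - y‖) :=
  ⟨0, by rintro _ ⟨z, rfl⟩; positivity⟩

lemma norm_sub_le_doubleDist (hP : (frontier P).Nonempty) (p q : Bool × E2) :
    ‖p.2 - q.2‖ ≤ doubleDist P p q := by
  by_cases h : p.1 = q.1
  · rw [doubleDist_of_fst_eq h]
  · have := hP.to_subtype
    rw [doubleDist_of_fst_ne h]
    exact le_ciInf fun z => norm_sub_le_norm_sub_add_norm_sub _ _ _

lemma infDist_le_doubleDist (hP : (frontier P).Nonempty) (h : p.1 ≠ q.1) :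
    infDist q.2 (frontier P) ≤ doubleDist P p q := by
  have := hP.to_subtype
  rw [doubleDist_of_fst_ne h]
  refine le_ciInf fun z => ?_
  have := infDist_le_dist_of_mem (x := q.2) z.2
  rw [dist_comm, dist_eq_norm] at this
  linarith [norm_nonneg (p.2 - z)]

lemma doubleDist_eq_norm_of_mem_frontier (hq : q.2 ∈ frontier P) :
    doubleDist P p q = ‖p.2 - q.2‖ := by
  by_cases h : p.1 = q.1
  · exact doubleDist_of_fst_eq h
  · refine le_antisymm ?_ (norm_sub_le_doubleDist ⟨_, hq⟩ p q)
    rw [doubleDist_of_fst_ne h]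
    simpa using ciInf_le (bddBelow_range_norm_add_norm p.2 q.2) ⟨q.2, hq⟩

lemma doubleDist_of_fst_ne_of_snd_eq (h : p.1 ≠ q.1) (h₂ : p.2 = q.2) :
    doubleDist P p q = 2 * infDist p.2 (frontier P) := by
  rw [doubleDist_of_fst_ne h, infDist_eq_iInf, Real.mul_iInf_of_nonneg zero_le_two, ← h₂]
  congr 1 with z
  rw [dist_eq_norm, norm_sub_rev (z : E2)]
  ring

end Double

structure IsHalfGeodesic (P : Set E2) (L : ℝ) (γ : ℝ → Bool × E2) : Prop where
  periodic : ∀ t, doubleDist P (γ (t + L)) (γ t) = 0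
  doubleDist_eq : ∀ s t, |s - t| ≤ L / 2 → doubleDist P (γ s) (γ t) = |s - t|

namespace IsHalfGeodesic

variable {P : Set E2} {L : ℝ} {γ : ℝ → Bool × E2} {s t u : ℝ}

lemma snd_add_period (hγ : IsHalfGeodesic P L γ) (hP : (frontier P).Nonempty) (t : ℝ) :
    (γ (t + L)).2 = (γ t).2 := by
  rw [← sub_eq_zero, ← norm_le_zero_iff, ← hγ.periodic t]
  exact norm_sub_le_doubleDist hP _ _

lemma dist_snd_le (hγ : IsHalfGeodesic P L γ) (hP : (frontier P).Nonempty)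
    (h : |s - t| ≤ L / 2) : dist (γ s).2 (γ t).2 ≤ |s - t| :=
  hγ.doubleDist_eq s t h ▸ norm_sub_le_doubleDist hP _ _

lemma dist_snd_eq_of_mem_frontier (hγ : IsHalfGeodesic P L γ) (hu : (γ u).2 ∈ frontier P)
    (h : |s - u| ≤ L / 2) : dist (γ s).2 (γ u).2 = |s - u| := by
  rw [dist_eq_norm, ← doubleDist_eq_norm_of_mem_frontier hu, hγ.doubleDist_eq s u h]

/-- The two visits are on opposite faces, joined through the nearest boundary point. -/
lemma two_mul_infDist_eq (hγ : IsHalfGeodesic P L γ) (h : |s - t| ≤ L / 2) (hst : s ≠ t)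
    (heq : (γ s).2 = (γ t).2) : 2 * infDist (γ s).2 (frontier P) = |s - t| := by
  rw [← hγ.doubleDist_eq s t h]
  by_cases hfst : (γ s).1 = (γ t).1
  · have := hγ.doubleDist_eq s t h
    rw [doubleDist_of_fst_eq hfst, heq, sub_self, norm_zero] at this
    exact absurd this.symm (abs_pos.2 (sub_ne_zero.2 hst)).ne'
  · rw [doubleDist_of_fst_ne_of_snd_eq hfst heq]

lemma isLocallyConstant_fst (hγ : IsHalfGeodesic P L γ) (hP : (frontier P).Nonempty)
    (hL : 0 < L) (h : ∀ t, (γ t).2 ∉ frontier P) : IsLocallyConstant fun t => (γ t).1 := by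
  rw [IsLocallyConstant.iff_eventually_eq]
  intro s
  have hr : 0 < infDist (γ s).2 (frontier P) :=
    (isClosed_frontier.notMem_iff_infDist_pos hP).1 (h s)
  filter_upwards [ball_mem_nhds s (lt_min hr (half_pos hL))] with t ht
  rw [mem_ball, Real.dist_eq, lt_min_iff] at ht
  by_contra hne
  have := infDist_le_doubleDist hP hne
  rw [hγ.doubleDist_eq t s ht.2.le] at this
  linarith

lemma exists_snd_mem_frontier (hγ : IsHalfGeodesic P L γ) (hP : (frontier P).Nonempty)
    (hL : 0 < L) : ∃ u, (γ u).2 ∈ frontier P := by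
  by_contra! h
  have hfst := (hγ.isLocallyConstant_fst hP hL h).apply_eq_of_preconnectedSpace
  refine not_dist_eq_abs_sub_of_loop hL (f := fun t => (γ t).2) ?_ fun s t hst => ?_
  · simpa using hγ.snd_add_period hP 0
  · rw [dist_eq_norm, ← doubleDist_of_fst_eq (hfst s t), hγ.doubleDist_eq s t hst]

/-- Both points are at distance `s` from `(γ u).2 ∈ ∂P` and within `L / 2 - s` of
`(γ (u + L / 2)).2 = (γ (u - L / 2)).2`, so they are the same point of that chord. -/
lemma snd_add_eq_snd_sub (hγ : IsHalfGeodesic P L γ) (hP : (frontier P).Nonempty) (hL : 0 < L)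
    (hu : (γ u).2 ∈ frontier P) (hs₀ : 0 ≤ s) (hs : s ≤ L / 2) :
    (γ (u + s)).2 = (γ (u - s)).2 := by
  set A := (γ u).2
  set B := (γ (u + L / 2)).2
  have hB : (γ (u - L / 2)).2 = B := by
    rw [← hγ.snd_add_period hP, show u - L / 2 + L = u + L / 2 by ring]
  have hAB : dist A B = L / 2 := by
    have h : |u + L / 2 - u| = L / 2 := by rw [add_sub_cancel_left, abs_of_pos (half_pos hL)]
    rw [dist_comm, hγ.dist_snd_eq_of_mem_frontier hu h.le, h]
  have hchord (v : ℝ) (hv : |v - u| = s) (hvB : dist (γ v).2 B ≤ L / 2 - s) :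
      (γ v).2 = AffineMap.lineMap A B (2 * s / L) := by
    refine eq_lineMap_of_dist_le ?_ ?_
    · rw [dist_comm, hγ.dist_snd_eq_of_mem_frontier hu (by linarith), hv, hAB]
      field_simp; rfl
    · rw [hAB]
      convert hvB using 1
      field_simp
  rw [hchord (u + s) (by simp [abs_of_nonneg hs₀]), hchord (u - s) (by simp [abs_of_nonneg hs₀])]
  · have h : |u - s - (u - L / 2)| = L / 2 - s := by
      rw [show u - s - (u - L / 2) = L / 2 - s by ring, abs_of_nonneg (by linarith)]
    have := hγ.dist_snd_le hP (h.trans_le (by linarith))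
    rwa [hB, h] at this
  · have h : |u + s - (u + L / 2)| = L / 2 - s := by
      rw [show u + s - (u + L / 2) = -(L / 2 - s) by ring, abs_neg, abs_of_nonneg (by linarith)]
    have := hγ.dist_snd_le hP (h.trans_le (by linarith))
    rwa [h] at this

lemma snd_add_half_mem_frontier (hγ : IsHalfGeodesic P L γ) (hP : (frontier P).Nonempty)
    (hL : 0 < L) (hu : (γ u).2 ∈ frontier P) : (γ (u + L / 2)).2 ∈ frontier P := by
  set B := (γ (u + L / 2)).2
  -- at times `u + L / 2 ± δ` the curve is at the same point, within `δ` of `B` and at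
  -- distance `δ` from `∂P`
  have hnear (δ : ℝ) (hδ : 0 < δ) (hδL : δ ≤ L / 4) : infDist B (frontier P) ≤ 2 * δ := by
    have hsame : (γ (u + L / 2 - δ)).2 = (γ (u + L / 2 + δ)).2 := by
      rw [show u + L / 2 - δ = u + (L / 2 - δ) by ring,
        hγ.snd_add_eq_snd_sub hP hL hu (by linarith) (by linarith), ← hγ.snd_add_period hP]
      congr 2
      ring
    have hinf := hγ.two_mul_infDist_eq (s := u + L / 2 - δ) (t := u + L / 2 + δ)
      (by rw [show u + L / 2 - δ - (u + L / 2 + δ) = -(2 * δ) by ring, abs_neg,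
        abs_of_pos (by positivity)]; linarith) (by linarith) hsame
    have hdist := hγ.dist_snd_le hP (s := u + L / 2) (t := u + L / 2 - δ)
      (by rw [show u + L / 2 - (u + L / 2 - δ) = δ by ring, abs_of_pos hδ]; linarith)
    rw [show u + L / 2 - (u + L / 2 - δ) = δ by ring, abs_of_pos hδ] at hdist
    rw [show u + L / 2 - δ - (u + L / 2 + δ) = -(2 * δ) by ring, abs_neg,
      abs_of_pos (by positivity)] at hinf
    linarith [infDist_le_infDist_add_dist (s := frontier P) (x := B) (y := (γ (u + L / 2 - δ)).2)]
  have hzero : infDist B (frontier P) = 0 := by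
    refine le_antisymm (le_of_forall_pos_le_add fun ε hε => ?_) infDist_nonneg
    have := hnear (min (L / 4) (ε / 2)) (by positivity) (min_le_left _ _)
    linarith [min_le_right (L / 4) (ε / 2)]
  rw [← isClosed_frontier.closure_eq, mem_closure_iff_infDist_zero hP]
  exact hzero

/-- Take `A = (γ u).2 ∈ ∂P`: then `B = (γ (u + L / 2)).2 ∈ ∂P`, and the point visited at times
`u ± L / 4` is the midpoint of `A` and `B` and lies at distance `L / 4` from `∂P`. -/
lemma exists_snd_eq_midpoint (hγ : IsHalfGeodesic P L γ) (hP : (frontier P).Nonempty)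
    (hL : 0 < L) : ∃ A B t, A ∈ frontier P ∧ B ∈ frontier P ∧ A ≠ B ∧
      (γ t).2 = midpoint ℝ A B ∧ dist A (γ t).2 = infDist (γ t).2 (frontier P) := by
  obtain ⟨u, hA⟩ := hγ.exists_snd_mem_frontier hP hL
  have hB := hγ.snd_add_half_mem_frontier hP hL hA
  have h₁ : |u + L / 4 - u| = L / 4 := by rw [add_sub_cancel_left, abs_of_pos (by positivity)]
  have h₂ : |u + L / 4 - (u + L / 2)| = L / 4 := by
    rw [show u + L / 4 - (u + L / 2) = -(L / 4) by ring, abs_neg, abs_of_pos (by positivity)]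
  have h₃ : |u + L / 2 - u| = L / 2 := by rw [add_sub_cancel_left, abs_of_pos (by positivity)]
  have hAc : dist (γ u).2 (γ (u + L / 4)).2 = L / 4 := by
    rw [dist_comm, hγ.dist_snd_eq_of_mem_frontier hA (h₁.trans_le (by linarith)), h₁]
  have hcB : dist (γ (u + L / 4)).2 (γ (u + L / 2)).2 = L / 4 := by
    rw [hγ.dist_snd_eq_of_mem_frontier hB (h₂.trans_le (by linarith)), h₂]
  have hAB : dist (γ u).2 (γ (u + L / 2)).2 = L / 2 := by
    rw [dist_comm, hγ.dist_snd_eq_of_mem_frontier hA h₃.le, h₃]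
  refine ⟨_, _, u + L / 4, hA, hB, dist_pos.1 (by linarith), ?_, ?_⟩
  · exact eq_midpoint_of_dist_eq_half (by rw [hAc, hAB]; ring) (by rw [hcB, hAB]; ring)
  · have h := hγ.two_mul_infDist_eq (s := u + L / 4) (t := u - L / 4) (by
      rw [show u + L / 4 - (u - L / 4) = L / 2 by ring, abs_of_pos (by positivity)])
      (by linarith) (hγ.snd_add_eq_snd_sub hP hL hA (by positivity) (by linarith))
    rw [show u + L / 4 - (u - L / 4) = L / 2 by ring, abs_of_pos (by positivity)] at h
    rw [hAc]
    linarith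

end IsHalfGeodesic

/-- For odd `n ≥ 3`, the double of the regular `n`-gon admits no
half-geodesic: there is no `L > 0` and no curve `γ : ℝ → {0,1} × P_n` that is
`L`-periodic for `D` and minimizes on all subintervals of length `L/2`. -/
theorem odd_doubled_polygon_no_half_geodesic
    (n : ℕ) (hn : 3 ≤ n) (hodd : Odd n) :
    ¬ ∃ (L : ℝ) (γ : ℝ → Bool × E2), 0 < L ∧
      (∀ t : ℝ, (γ t).2 ∈ Pgon n) ∧
      (∀ t : ℝ, doubleDist (Pgon n) (γ (t + L)) (γ t) = 0) ∧
      (∀ s t : ℝ, |s - t| ≤ L / 2 →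
        doubleDist (Pgon n) (γ s) (γ t) = |s - t|) := by
  rintro ⟨L, γ, hL, hmem, hper, hmin⟩
  obtain ⟨A, B, t, hA, hB, hAB, hmid, hinf⟩ :=
    IsHalfGeodesic.exists_snd_eq_midpoint ⟨hper, hmin⟩ (frontier_Pgon_nonempty (by omega)) hL
  set c := (γ t).2
  have hBc : dist B c = dist A c := by
    rw [hmid, dist_left_midpoint, dist_right_midpoint, dist_comm]
  obtain ⟨k, hk⟩ := exists_sub_eq_smul_outNormal hn hA (hmem t) hinf
  obtain ⟨j, hj⟩ := exists_sub_eq_smul_outNormal hn hB (hmem t) (hBc.trans hinf)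
  have hopp : A - c = -(B - c) := by
    rw [hmid, left_sub_midpoint, right_sub_midpoint, ← smul_neg, neg_sub]
  rw [hk, hj, hBc, ← smul_neg] at hopp
  have hAc : dist A c ≠ 0 := by
    rw [hmid, dist_left_midpoint]
    exact mul_ne_zero (by norm_num) (dist_ne_zero.2 hAB)
  exact outNormal_ne_neg hodd k j (smul_right_injective E2 hAc hopp)
end
end

section
/- Let n ≥ 3 and let P_n be the regular n-gon. Every half-geodesic of the double of P_n passes through a boundary point: if γ : ℝ → {0,1} × P_n satisfies D(γ(t+L), γ(t)) = 0 for all t ∈ ℝ and D(γ(s), γ(t)) = |s − t| whenever |s − t| ≤ L/2, for some L > 0, then there exists t ∈ ℝ such that the second component of γ(t) lies in the frontier ∂P_n. -/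
open Real

noncomputable section

/-! If `γ` stays on one face, it is a closed curve in the plane which is isometric on every
interval of length `L/2`. In a strictly convex space the points `γ (L/4)` and `γ (3L/4)` are
then both the midpoint of `γ 0 = γ L` and `γ (L/2)`, although they are `L/2` apart.

So `γ` changes face, and by connectedness of `ℝ` there is a time `c` at which the face is not
locally constant. Points on opposite faces at double distance `d > 0` are joined through a
boundary point within `d` of each of them, so `γ c` is a limit of boundary points. -/

open Filter Topology

theorem not_periodic_of_dist_eq_abs_sub {V P : Type*} [NormedAddCommGroup V] [NormedSpace ℝ V]
    [StrictConvexSpace ℝ V] [MetricSpace P] [NormedAddTorsor V P]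
    {f : ℝ → P} {L : ℝ} (hL : 0 < L)
    (hiso : ∀ s t, |s - t| ≤ L / 2 → dist (f s) (f t) = |s - t|) :
    f L ≠ f 0 := by
  intro hloop
  have dist_f : ∀ s t, t ≤ s → s - t ≤ L / 2 → dist (f s) (f t) = s - t := fun s t hts hst => by
    rw [hiso s t (by rwa [abs_of_nonneg (sub_nonneg.2 hts)]), abs_of_nonneg (sub_nonneg.2 hts)]
  have h₀ := dist_f (L / 2) 0 (by linarith) (by linarith)
  have h₁ := dist_f (L / 4) 0 (by linarith) (by linarith)
  have h₂ := dist_f (L / 2) (L / 4) (by linarith) (by linarith)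
  have h₃ := dist_f (3 * L / 4) (L / 2) (by linarith) (by linarith)
  have h₄ := dist_f L (3 * L / 4) (by linarith) (by linarith)
  have h₅ := dist_f (3 * L / 4) (L / 4) (by linarith) (by linarith)
  rw [hloop] at h₄
  have hm₁ : f (L / 4) = midpoint ℝ (f 0) (f (L / 2)) :=
    eq_midpoint_of_dist_eq_half (by rw [dist_comm (f 0), dist_comm (f 0), h₁, h₀]; ring)
      (by rw [dist_comm (f (L / 4)), h₂, dist_comm (f 0), h₀]; ring)
  have hm₂ : f (3 * L / 4) = midpoint ℝ (f 0) (f (L / 2)) :=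
    eq_midpoint_of_dist_eq_half (by rw [h₄, dist_comm (f 0), h₀]; ring)
      (by rw [h₃, dist_comm (f 0), h₀]; ring)
  rw [hm₁, hm₂, dist_self] at h₅
  linarith

theorem exists_mem_frontier_dist_lt_of_doubleDist_lt {P : Set E2} {p q : Bool × E2}
    (hpq : p.1 ≠ q.1) (hpos : 0 < doubleDist P p q) {ε : ℝ} (hε : doubleDist P p q < ε) :
    ∃ z ∈ frontier P, dist p.2 z < ε := by
  rw [doubleDist, if_neg hpq] at hpos hε
  have hne : ((fun z => ‖p.2 - z‖ + ‖z - q.2‖) '' frontier P).Nonempty := by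
    by_contra h
    rw [Set.not_nonempty_iff_eq_empty.1 h, Real.sInf_empty] at hpos
    exact lt_irrefl 0 hpos
  obtain ⟨_, ⟨z, hz, rfl⟩, hlt⟩ := exists_lt_of_csInf_lt hne hε
  exact ⟨z, hz, by rw [dist_eq_norm]; linarith [norm_nonneg (z - q.2)]⟩

theorem exists_mem_frontier_of_face_ne {P : Set E2} {γ : ℝ → Bool × E2} {δ : ℝ} (hδ : 0 < δ)
    (hmin : ∀ s t, |s - t| ≤ δ → doubleDist P (γ s) (γ t) = |s - t|)
    {s t : ℝ} (hst : (γ s).1 ≠ (γ t).1) :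
    ∃ c, (γ c).2 ∈ frontier P := by
  obtain ⟨c, hc⟩ : ∃ c, ∃ᶠ u in 𝓝 c, (γ u).1 ≠ (γ c).1 := by
    by_contra! h
    have hconst : IsLocallyConstant fun u => (γ u).1 := (IsLocallyConstant.iff_eventually_eq _).2 h
    exact hst (hconst.apply_eq_of_preconnectedSpace s t)
  refine ⟨c, isClosed_frontier.closure_subset (Metric.mem_closure_iff.2 fun ε hε => ?_)⟩
  obtain ⟨u, hface, hu⟩ := (hc.and_eventually (Metric.ball_mem_nhds c (lt_min hε hδ))).exists
  rw [Real.dist_eq, lt_min_iff] at hu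
  have hd := hmin c u (by rw [abs_sub_comm]; exact hu.2.le)
  have hcu : c ≠ u := fun h => hface (h ▸ rfl)
  exact exists_mem_frontier_dist_lt_of_doubleDist_lt (Ne.symm hface)
    (hd ▸ abs_pos.2 (sub_ne_zero.2 hcu)) (by rw [hd, abs_sub_comm]; exact hu.1)

theorem half_geodesic_meets_boundary_general
    (n : ℕ)
    (L : ℝ) (hL : 0 < L) (γ : ℝ → Bool × E2)
    (hper : ∀ t : ℝ, doubleDist (Pgon n) (γ (t + L)) (γ t) = 0)
    (hmin : ∀ s t : ℝ, |s - t| ≤ L / 2 →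
      doubleDist (Pgon n) (γ s) (γ t) = |s - t|) :
    ∃ t : ℝ, (γ t).2 ∈ frontier (Pgon n) := by
  by_cases hface : ∀ s t, (γ s).1 = (γ t).1
  · have hloop : (γ L).2 = (γ 0).2 := by
      simpa only [zero_add, doubleDist, if_pos (hface _ _), norm_sub_eq_zero_iff] using hper 0
    have hiso : ∀ s t, |s - t| ≤ L / 2 → dist (γ s).2 (γ t).2 = |s - t| := fun s t hst => by
      rw [dist_eq_norm, ← hmin s t hst, doubleDist, if_pos (hface s t)]
    exact absurd hloop (not_periodic_of_dist_eq_abs_sub (f := fun t => (γ t).2) hL hiso)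
  · push Not at hface
    obtain ⟨s, t, hst⟩ := hface
    exact exists_mem_frontier_of_face_ne (half_pos hL) hmin hst

/-- Every half-geodesic of the double of the regular `n`-gon (`n ≥ 3`)
passes through a boundary point: if `γ : ℝ → {0,1} × P_n` is `L`-periodic
for `D` and minimizes on all subintervals of length `L/2` for some `L > 0`,
then some point of `γ` lies over the frontier `∂P_n`. -/
theorem half_geodesic_meets_boundary
    (n : ℕ) (hn : 3 ≤ n)
    (L : ℝ) (hL : 0 < L) (γ : ℝ → Bool × E2)
    (hmem : ∀ t : ℝ, (γ t).2 ∈ Pgon n)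
    (hper : ∀ t : ℝ, doubleDist (Pgon n) (γ (t + L)) (γ t) = 0)
    (hmin : ∀ s t : ℝ, |s - t| ≤ L / 2 →
      doubleDist (Pgon n) (γ s) (γ t) = |s - t|) :
    ∃ t : ℝ, (γ t).2 ∈ frontier (Pgon n) :=
  half_geodesic_meets_boundary_general n L hL γ hper hmin
end
end
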